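/- arXiv:1002.3141 — 2 statements merged into one kernel-verified Lean document; each statement's English description precedes it below -/
import Mathlib

section
/- Let H be a finitely generated subgroup of a free group F_n and let g ∈ F_n \ H. Then there is a finitely generated subgroup F' of F_n of finite index such that F' decomposes as a free product F' = H * K and g ∉ F'. -/
open Set Pointwise MeasureTheory

/-- An ℝ-tree: a geodesic metric space in which any two points are joined by a
unique topological arc, which is isometric to a real segment. -/
class RTree (T : Type*) [MetricSpace T] : Prop where
  isGeodesic : ∀ x y : T, ∃ f : ℝ → T, f 0 = x ∧ f (dist x y) = y ∧
    ∀ s ∈ Set.Icc (0:ℝ) (dist x y), ∀ t ∈ Set.Icc (0:ℝ) (dist x y),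
      dist (f s) (f t) = |s - t|
  arc_unique : ∀ (x y : T) (f g : ℝ → T) (a b c d : ℝ),
    ContinuousOn f (Set.Icc a b) → Set.InjOn f (Set.Icc a b) → f a = x → f b = y →
    ContinuousOn g (Set.Icc c d) → Set.InjOn g (Set.Icc c d) → g c = x → g d = y →
    f '' Set.Icc a b = g '' Set.Icc c d

variable {T : Type*} [MetricSpace T]

/-- The segment `[x,y]` in an ℝ-tree: the set of points between `x` and `y`. -/
def seg (x y : T) : Set T := {z | dist x z + dist z y = dist x y}

/-- A set is non-degenerate if it contains at least two points. -/
def Nondeg (I : Set T) : Prop := ∃ x ∈ I, ∃ y ∈ I, x ≠ y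

/-- A (possibly degenerate) arc of an ℝ-tree. -/
def IsArc (I : Set T) : Prop := ∃ x y : T, I = seg x y

/-- A subtree: a nonempty convex subset. -/
def IsSubtree (S : Set T) : Prop := S.Nonempty ∧ ∀ x ∈ S, ∀ y ∈ S, seg x y ⊆ S

section Action

variable (T)
variable (G : Type*) [Group G] [MulAction G T]

/-- Indecomposability of an action on an ℝ-tree (Guirardel). -/
def Indecomposable : Prop :=
  ∀ I J : Set T, IsArc I → Nondeg I → IsArc J → Nondeg J →
    ∃ (r : ℕ) (g : Fin (r + 1) → G),
      (J ⊆ ⋃ i, g i • I) ∧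
      ∀ i : Fin r, Nondeg ((g i.castSucc • I) ∩ (g i.succ • I))

/-- A transverse family: a nonempty `G`-invariant collection of non-degenerate
proper subtrees, any two distinct members of which meet in at most one point. -/
def IsTransverseFamily (𝒯 : Set (Set T)) : Prop :=
  𝒯.Nonempty ∧
  (∀ S ∈ 𝒯, IsSubtree S ∧ Nondeg S ∧ S ≠ Set.univ) ∧
  (∀ g : G, ∀ S ∈ 𝒯, g • S ∈ 𝒯) ∧
  (∀ S₁ ∈ 𝒯, ∀ S₂ ∈ 𝒯, S₁ ≠ S₂ → Set.Subsingleton (S₁ ∩ S₂))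

/-- The action has dense orbits. -/
def DenseOrbits : Prop := ∀ x : T, Dense {z : T | ∃ g : G, g • x = z}

/-- Minimality: no proper nonempty invariant subtree. -/
def MinimalAction : Prop :=
  ∀ S : Set T, IsSubtree S → (∀ g : G, g • S = S) → S = Set.univ

end Action

section Elements

variable (T)
variable {G : Type*} [Group G] [MulAction G T]

/-- Translation length of a group element acting on `T`. -/
noncomputable def translationLength (g : G) : ℝ := ⨅ x : T, dist x (g • x)

/-- A hyperbolic isometry: one with no fixed point. -/
def IsHyperbolic (g : G) : Prop := ∀ x : T, g • x ≠ x

/-- The axis (resp. fixed-point set) of `g`: points where the displacement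
is equal to the translation length. -/
noncomputable def axisSet (g : G) : Set T :=
  {x : T | dist x (g • x) = translationLength T g}

variable (G)

/-- The minimal invariant subtree of a subgroup: the union of axes of its
hyperbolic elements. -/
noncomputable def minSubtree (H : Subgroup G) : Set T :=
  ⋃ h ∈ {h : G | h ∈ H ∧ IsHyperbolic T h}, axisSet T h

/-- A maximal cyclic subgroup. -/
def IsMaximalCyclic {G : Type*} [Group G] (C : Subgroup G) : Prop :=
  (∃ c, C = Subgroup.zpowers c) ∧
  ∀ D : Subgroup G, (∃ d, D = Subgroup.zpowers d) → C ≤ D → D = C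

/-- A tripod determined by three points, none on the segment of the other two. -/
def IsTripod (x y z : T) : Prop := x ∉ seg y z ∧ y ∉ seg x z ∧ z ∉ seg x y

/-- A very small action: minimal, stabilizers of non-degenerate arcs trivial
or maximal cyclic, stabilizers of tripods trivial. -/
def VerySmall : Prop :=
  MinimalAction T G ∧
  (∀ x y : T, x ≠ y →
    MulAction.stabilizer G (seg x y) = ⊥ ∨
    IsMaximalCyclic (MulAction.stabilizer G (seg x y))) ∧
  (∀ x y z : T, IsTripod T x y z →
    MulAction.stabilizer G (seg x y ∪ seg y z ∪ seg x z) = ⊥)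

end Elements

/-- A discrete subset of a metric space. -/
def DiscreteSet (S : Set T) : Prop :=
  ∀ y ∈ S, ∃ ε > (0:ℝ), ∀ z ∈ S, dist y z < ε → z = y

/-- A finite forest: a finite union of segments. -/
def FiniteForest (F : Set T) : Prop :=
  ∃ s : Finset (T × T), F = ⋃ p ∈ s, seg p.1 p.2

/-- The Lebesgue length measure: a Borel measure giving each segment its length. -/
def IsLebesgueMeasure [MeasurableSpace T] (μ : Measure T) : Prop :=
  ∀ x y : T, μ (seg x y) = ENNReal.ofReal (dist x y)

section FreeProducts

variable {G : Type*} [Group G]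

/-- `F'` is the internal free product of its subgroups `H` and `K`. -/
def IsInternalFreeProduct (F' H K : Subgroup G) : Prop :=
  H ≤ F' ∧ K ≤ F' ∧
  Function.Injective (Monoid.Coprod.lift H.subtype K.subtype) ∧
  (Monoid.Coprod.lift H.subtype K.subtype).range = F'

/-- `H` is a free factor of `G`. -/
def IsFreeFactor (H : Subgroup G) : Prop :=
  ∃ K : Subgroup G, IsInternalFreeProduct ⊤ H K

/-- `H` is e-algebraically closed in `G`: for every `g ∉ H`, the canonical map
`H ∗ ⟨g⟩ → G` is injective, i.e. `⟨H, g⟩ ≅ H ∗ ⟨g⟩`. -/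
def IsEAlgClosed (H : Subgroup G) : Prop :=
  ∀ g : G, g ∉ H →
    Function.Injective (Monoid.Coprod.lift H.subtype (Subgroup.zpowers g).subtype)

/-- `H` is e-algebraically closed in the subgroup `F'`. -/
def IsEAlgClosedIn (H F' : Subgroup G) : Prop :=
  H ≤ F' ∧ ∀ g ∈ F', g ∉ H →
    Function.Injective (Monoid.Coprod.lift H.subtype (Subgroup.zpowers g).subtype)

end FreeProducts


/-!
Let `S` be the finite set of cosets `sH`, where `s` runs over the suffixes of the reduced words
of `g` and of a finite generating set of `H`. Each generator `i` of `F_n` acts on `S` as the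
partial bijection `x ↦ i • x`; extending these to permutations of `S` gives an action of `F_n`
on a finite set (a finite cover of the rose that contains the Stallings graph of `H`), and `F'`
is the stabilizer of the coset `H`. It has finite index, contains `H`, and misses `g` because
reading `g` from `H` stays inside `S` and ends at `gH ≠ H`.

Choosing for every vertex a shortest path from `H` inside `S` gives a Schreier transversal whose
tree lies in the induced subgraph on `S`. By Schreier's theorem `F'` is free on the non-tree
edges; the Schreier generators of the non-tree edges inside `S` lie in `H` and generate it (the
words of the generators never leave `S`), so the remaining edges generate a free complement `K`.
-/

namespace Monoid.Coprod

variable {M N G : Type*} [Group M] [Group N] [Group G]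

theorem isInternalFreeProduct_range_lift (f : M →* G) (g : N →* G)
    (h : Function.Injective (lift f g)) :
    IsInternalFreeProduct (lift f g).range f.range g.range := by
  have hmap : (lift f.range.subtype g.range.subtype).comp (map f.rangeRestrict g.rangeRestrict) =
      lift f g := by
    ext <;> rfl
  have hsurj : Function.Surjective (map f.rangeRestrict g.rangeRestrict) := by
    rw [← MonoidHom.range_eq_top, range_eq, map_comp_inl, map_comp_inr, MonoidHom.range_comp,
      MonoidHom.range_comp, MonoidHom.range_eq_top.2 f.rangeRestrict_surjective,
      MonoidHom.range_eq_top.2 g.rangeRestrict_surjective, ← MonoidHom.range_eq_map,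
      ← MonoidHom.range_eq_map, range_inl_sup_range_inr]
  refine ⟨range_lift f g ▸ le_sup_left, range_lift f g ▸ le_sup_right, ?_, ?_⟩
  · rw [← hmap, MonoidHom.coe_comp] at h
    exact h.of_comp_right hsurj
  · rw [range_lift, range_lift, Subgroup.range_subtype, Subgroup.range_subtype]

end Monoid.Coprod

namespace FreeGroup

theorem mk_cons {α : Type*} (a : α × Bool) (l : List (α × Bool)) :
    mk (a :: l) = mk [a] * mk l := by
  rw [mul_mk]
  rfl

theorem mk_singleton_false {α : Type*} (i : α) : mk [(i, false)] = (of i)⁻¹ := by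
  rw [show of i = mk [(i, true)] from rfl, inv_mk]
  rfl

section FreeProduct

variable {β G : Type*} [Group G]

noncomputable def coprodSubtypeEquiv (p : β → Prop) :
    Monoid.Coprod (FreeGroup {b // p b}) (FreeGroup {b // ¬p b}) ≃* FreeGroup β := by
  classical
  exact MonoidHom.toMulEquiv (Monoid.Coprod.lift (map Subtype.val) (map Subtype.val))
    (lift fun b => if h : p b then .inl (of ⟨b, h⟩) else .inr (of ⟨b, h⟩))
    (by ext ⟨b, hb⟩ <;> simp [hb]) (by ext b; by_cases hb : p b <;> simp [hb])

theorem isInternalFreeProduct_closure_image {e : FreeGroup β →* G}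
    (he : Function.Injective e) (p : β → Prop) :
    IsInternalFreeProduct e.range (Subgroup.closure ((fun b => e (of b)) '' {b | p b}))
      (Subgroup.closure ((fun b => e (of b)) '' {b | ¬p b})) := by
  have hrange (q : β → Prop) : (e.comp (map (Subtype.val : {b // q b} → β))).range =
      Subgroup.closure ((fun b => e (of b)) '' {b | q b}) := by
    rw [MonoidHom.range_comp, range_map, MonoidHom.map_closure, Subtype.range_coe_subtype,
      Set.image_image]
  have hlift : Monoid.Coprod.lift (e.comp (map Subtype.val)) (e.comp (map Subtype.val)) =
      e.comp (coprodSubtypeEquiv p).toMonoidHom := by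
    ext <;> rfl
  have htop : (coprodSubtypeEquiv p).toMonoidHom.range = ⊤ :=
    MonoidHom.range_eq_top.2 (coprodSubtypeEquiv p).surjective
  have := Monoid.Coprod.isInternalFreeProduct_range_lift (e.comp (map Subtype.val))
    (e.comp (map Subtype.val)) (by rw [hlift]; exact he.comp (coprodSubtypeEquiv p).injective)
  rwa [hlift, MonoidHom.range_comp, htop, ← MonoidHom.range_eq_map, hrange, hrange] at this

end FreeProduct

section PathLabel

variable {α β X : Type*} (φ : FreeGroup α →* Equiv.Perm X) (r : X → α → FreeGroup β)

/-- The letter `i` moves `x` to `φ (of i) x` and multiplies the second coordinate on the left by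
the label `r x i` of the edge it crosses; so `pathLabel φ r w x` is the product of the labels
along the path of `w` from `x`. -/
def labelledAction : FreeGroup α →* Equiv.Perm (X × FreeGroup β) :=
  lift fun i => (φ (of i)).prodShear fun x => Equiv.mulLeft (r x i)

def pathLabel (w : FreeGroup α) (x : X) : FreeGroup β :=
  (labelledAction φ r w (x, 1)).2

variable {φ r}

theorem labelledAction_apply (w : FreeGroup α) (x : X) (u : FreeGroup β) :
    labelledAction φ r w (x, u) = (φ w x, pathLabel φ r w x * u) := by
  induction w using FreeGroup.induction_on generalizing x u with
  | C1 => simp [pathLabel]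
  | of i => simp [labelledAction, pathLabel]
  | inv_of i ih =>
    have hinv (u : FreeGroup β) : labelledAction φ r (of i)⁻¹ (x, u) =
        (φ (of i)⁻¹ x, (pathLabel φ r (of i) (φ (of i)⁻¹ x))⁻¹ * u) := by
      rw [_root_.map_inv, Equiv.Perm.inv_eq_iff_eq, ih]
      simp
    have hlabel : pathLabel φ r (of i)⁻¹ x = (pathLabel φ r (of i) (φ (of i)⁻¹ x))⁻¹ := by
      have := congrArg Prod.snd (hinv 1)
      rwa [mul_one] at this
    rw [hinv, hlabel]
  | mul v w hv hw =>
    have hvw : pathLabel φ r (v * w) x = pathLabel φ r v (φ w x) * pathLabel φ r w x := by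
      rw [pathLabel, _root_.map_mul, Equiv.Perm.mul_apply, hw, hv, mul_one]
    rw [_root_.map_mul, Equiv.Perm.mul_apply, hw, hv, hvw, _root_.map_mul, Equiv.Perm.mul_apply,
      mul_assoc]

@[simp]
theorem pathLabel_one (x : X) : pathLabel φ r 1 x = 1 := by
  simp [pathLabel]

@[simp]
theorem pathLabel_of (i : α) (x : X) : pathLabel φ r (of i) x = r x i := by
  simp [pathLabel, labelledAction]

theorem pathLabel_mul (v w : FreeGroup α) (x : X) :
    pathLabel φ r (v * w) x = pathLabel φ r v (φ w x) * pathLabel φ r w x := by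
  rw [pathLabel, _root_.map_mul, Equiv.Perm.mul_apply, labelledAction_apply,
    labelledAction_apply, mul_one]

theorem pathLabel_inv (w : FreeGroup α) (x : X) :
    pathLabel φ r w⁻¹ (φ w x) = (pathLabel φ r w x)⁻¹ := by
  rw [eq_inv_iff_mul_eq_one, ← pathLabel_mul, inv_mul_cancel, pathLabel_one]

theorem pathLabel_inv_of (i : α) (x : X) :
    pathLabel φ r (of i)⁻¹ x = (r (φ (of i)⁻¹ x) i)⁻¹ := by
  have hx : φ (of i) (φ (of i)⁻¹ x) = x := by simp
  conv_lhs => rw [← hx]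
  rw [pathLabel_inv, pathLabel_of]

end PathLabel

section Schreier

variable {α X : Type*} (φ : FreeGroup α →* Equiv.Perm X) (t : X → FreeGroup α)

/-- The edges `x ⟶ φ (of i) x` outside the spanning tree determined by `t`. -/
def schreierEdges : Set (X × α) :=
  {e | t (φ (of e.2) e.1) ≠ of e.2 * t e.1}

def schreierGen (e : X × α) : FreeGroup α :=
  (t (φ (of e.2) e.1))⁻¹ * of e.2 * t e.1

open Classical in
noncomputable def schreierLabel (x : X) (i : α) : FreeGroup (schreierEdges φ t) :=
  if h : (x, i) ∈ schreierEdges φ t then of ⟨(x, i), h⟩ else 1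

def schreierHom : FreeGroup (schreierEdges φ t) →* FreeGroup α :=
  lift fun e => schreierGen φ t e

variable {φ t}

theorem schreierLabel_eq_one {x : X} {i : α} (h : t (φ (of i) x) = of i * t x) :
    schreierLabel φ t x i = 1 :=
  dif_neg (not_not_intro h)

theorem schreierLabel_mem_closure (P : X × α → Prop) {x : X} {i : α} (h : P (x, i)) :
    schreierLabel φ t x i ∈ Subgroup.closure (of '' {e : schreierEdges φ t | P e}) := by
  unfold schreierLabel
  split_ifs
  · exact Subgroup.subset_closure ⟨_, h, rfl⟩
  · exact one_mem _

theorem schreierHom_schreierLabel (x : X) (i : α) :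
    schreierHom φ t (schreierLabel φ t x i) = schreierGen φ t (x, i) := by
  by_cases h : (x, i) ∈ schreierEdges φ t
  · simp [schreierLabel, h, schreierHom]
  · rw [schreierLabel_eq_one (not_not.1 h), _root_.map_one, schreierGen, not_not.1 h]
    group

theorem schreierHom_pathLabel (w : FreeGroup α) (x : X) :
    schreierHom φ t (pathLabel φ (schreierLabel φ t) w x) = (t (φ w x))⁻¹ * w * t x := by
  induction w using FreeGroup.induction_on generalizing x with
  | C1 => simp
  | of i => rw [pathLabel_of, schreierHom_schreierLabel, schreierGen]
  | inv_of i _ =>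
    have hx : φ (of i) (φ (of i)⁻¹ x) = x := by simp
    rw [pathLabel_inv_of, _root_.map_inv, schreierHom_schreierLabel, schreierGen, hx]
    group
  | mul v w hv hw =>
    rw [pathLabel_mul, _root_.map_mul, hv, hw, _root_.map_mul, Equiv.Perm.mul_apply]
    group

variable (φ t) in
/-- Since `F_n` acts on the left, the parent of `x` is reached by deleting the first letter of
`t x` (a generator or its inverse); the rank `d` makes this recursion well founded. -/
structure IsSchreierTransversal (x₀ : X) : Prop where
  apply_root (x : X) : φ (t x) x₀ = x
  exists_rank : ∃ d : X → ℕ, ∀ x, t x = 1 ∨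
    ∃ y i, d y < d x ∧ (t x = of i * t y ∨ t x = (of i)⁻¹ * t y)

namespace IsSchreierTransversal

variable {x₀ : X}

theorem pathLabel_eq_one (ht : IsSchreierTransversal φ t x₀) (x : X) :
    pathLabel φ (schreierLabel φ t) (t x) x₀ = 1 := by
  obtain ⟨d, hd⟩ := ht.exists_rank
  induction hx : d x using Nat.strong_induction_on generalizing x with
  | _ n ih =>
  rcases hd x with h1 | ⟨y, i, hy, hxy | hxy⟩
  · rw [h1, pathLabel_one]
  · have hedge : φ (of i) y = x := by
      rw [← ht.apply_root y, ← Equiv.Perm.mul_apply, ← _root_.map_mul, ← hxy, ht.apply_root]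
    rw [hxy, pathLabel_mul, ht.apply_root, ih _ (hx ▸ hy) y rfl, pathLabel_of,
      schreierLabel_eq_one (by rw [hedge, hxy]), mul_one]
  · have hedge : φ (of i) x = y := by
      rw [← ht.apply_root x, ← Equiv.Perm.mul_apply, ← _root_.map_mul, hxy, mul_inv_cancel_left,
        ht.apply_root]
    have hedge' : φ (of i)⁻¹ y = x := by simp [← hedge]
    rw [hxy, pathLabel_mul, ht.apply_root, ih _ (hx ▸ hy) y rfl, pathLabel_inv_of, hedge',
      schreierLabel_eq_one (by rw [hedge, hxy, mul_inv_cancel_left]), inv_one, mul_one]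

theorem root_eq_one (ht : IsSchreierTransversal φ t x₀) : t x₀ = 1 := by
  have := schreierHom_pathLabel (φ := φ) (t := t) (t x₀) x₀
  rwa [ht.pathLabel_eq_one, _root_.map_one, ht.apply_root, inv_mul_cancel, one_mul,
    eq_comm] at this

theorem apply_schreierHom (ht : IsSchreierTransversal φ t x₀)
    (u : FreeGroup (schreierEdges φ t)) : φ (schreierHom φ t u) x₀ = x₀ := by
  suffices (schreierHom φ t).range ≤ (MulAction.stabilizer (Equiv.Perm X) x₀).comap φ from
    this ⟨u, rfl⟩
  refine range_lift_le ?_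
  rintro _ ⟨⟨⟨x, i⟩, -⟩, rfl⟩
  simp only [SetLike.mem_coe, Subgroup.mem_comap, MulAction.mem_stabilizer_iff,
    Equiv.Perm.smul_def, schreierGen, _root_.map_mul, _root_.map_inv, Equiv.Perm.mul_apply,
    ht.apply_root, Equiv.Perm.inv_eq_iff_eq]

/-- `pathLabel` at the root is Schreier's rewriting process: the path of the Schreier generator
of an edge `e` crosses no edge outside the tree except `e` itself. -/
theorem pathLabel_schreierHom (ht : IsSchreierTransversal φ t x₀)
    (u : FreeGroup (schreierEdges φ t)) :
    pathLabel φ (schreierLabel φ t) (schreierHom φ t u) x₀ = u := by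
  induction u using FreeGroup.induction_on with
  | C1 => rw [_root_.map_one, pathLabel_one]
  | of e =>
    obtain ⟨⟨x, i⟩, he⟩ := e
    have hy : φ (of i * t x) x₀ = φ (t (φ (of i) x)) x₀ := by
      rw [ht.apply_root, _root_.map_mul, Equiv.Perm.mul_apply, ht.apply_root]
    rw [schreierHom, lift_apply_of, schreierGen, mul_assoc, pathLabel_mul, hy, pathLabel_inv,
      ht.pathLabel_eq_one, pathLabel_mul, ht.pathLabel_eq_one, ht.apply_root, pathLabel_of,
      schreierLabel, dif_pos he, inv_one, one_mul, mul_one]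
  | inv_of e ih =>
    conv_lhs => rw [← ht.apply_schreierHom (of e)]
    rw [_root_.map_inv, pathLabel_inv, ih]
  | mul u v hu hv => rw [_root_.map_mul, pathLabel_mul, ht.apply_schreierHom, hu, hv]

theorem schreierHom_injective (ht : IsSchreierTransversal φ t x₀) :
    Function.Injective (schreierHom φ t) :=
  Function.LeftInverse.injective (g := fun w => pathLabel φ (schreierLabel φ t) w x₀)
    ht.pathLabel_schreierHom

theorem range_schreierHom (ht : IsSchreierTransversal φ t x₀) :
    (schreierHom φ t).range = (MulAction.stabilizer (Equiv.Perm X) x₀).comap φ := by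
  refine le_antisymm ?_ fun w hw => ⟨pathLabel φ (schreierLabel φ t) w x₀, ?_⟩
  · rintro _ ⟨u, rfl⟩
    exact ht.apply_schreierHom u
  · rw [Subgroup.mem_comap, MulAction.mem_stabilizer_iff, Equiv.Perm.smul_def] at hw
    rw [schreierHom_pathLabel, hw, ht.root_eq_one]
    group

end IsSchreierTransversal

end Schreier

end FreeGroup

theorem exists_perm_coe_eq_smul {G Y : Type*} [Group G] [MulAction G Y] (S : Set Y) [Finite S]
    (a : G) : ∃ π : Equiv.Perm S, ∀ x : S, a • (x : Y) ∈ S → (π x : Y) = a • (x : Y) := by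
  classical
  let e : {x : S // a • (x : Y) ∈ S} ≃ {x : S // a⁻¹ • (x : Y) ∈ S} :=
    { toFun x := ⟨⟨a • (x : Y), x.2⟩, by simp⟩
      invFun x := ⟨⟨a⁻¹ • (x : Y), x.2⟩, by simp⟩
      left_inv x := by ext; simp
      right_inv x := by ext; simp }
  exact ⟨e.extendSubtype, fun x hx => by rw [Equiv.extendSubtype_apply_of_mem e x hx]; rfl⟩

namespace MarshallHall

open FreeGroup

variable {α : Type*} [DecidableEq α] (H : Subgroup (FreeGroup α)) (W : Set (FreeGroup α))

def suffixes : Set (List (α × Bool)) :=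
  {l | ∃ w ∈ W, l <:+ w.toWord}

/-- The vertices visited when the reduced words of the elements of `W` are read letter by letter,
from the right, starting at the coset `H`. -/
def suffixCosets : Set (FreeGroup α ⧸ H) :=
  (fun l => ((mk l : FreeGroup α) : FreeGroup α ⧸ H)) '' suffixes W

def IsCosetEdge (e : suffixCosets H W × α) : Prop :=
  of e.2 • (e.1 : FreeGroup α ⧸ H) ∈ suffixCosets H W

variable {W} in
theorem mem_suffixes_of_suffix {l l' : List (α × Bool)} (h : l ∈ suffixes W) (hl : l' <:+ l) :
    l' ∈ suffixes W :=
  let ⟨w, hw, hlw⟩ := h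
  ⟨w, hw, hl.trans hlw⟩

variable {W} in
instance [Finite W] : Finite (suffixCosets H W) := by
  have : (suffixes W).Finite := by
    refine (Set.Finite.biUnion (Set.toFinite W) fun w _ => w.toWord.tails.finite_toSet).subset ?_
    rintro l ⟨w, hw, hl⟩
    exact Set.mem_biUnion hw ((List.mem_tails _ _).2 hl)
  exact (this.image _).to_subtype

variable {H W}

noncomputable def shortestSuffix (x : suffixCosets H W) : List (α × Bool) :=
  Function.argminOn List.length {l | l ∈ suffixes W ∧ ((mk l : FreeGroup α) : FreeGroup α ⧸ H) = x}
    x.2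

theorem shortestSuffix_mem (x : suffixCosets H W) : shortestSuffix x ∈ suffixes W :=
  (Function.argminOn_mem _ _ x.2).1

theorem coe_mk_shortestSuffix (x : suffixCosets H W) :
    ((mk (shortestSuffix x) : FreeGroup α) : FreeGroup α ⧸ H) = x :=
  (Function.argminOn_mem _ _ x.2).2

theorem length_shortestSuffix_le {x : suffixCosets H W} {l : List (α × Bool)}
    (hl : l ∈ suffixes W) (hx : ((mk l : FreeGroup α) : FreeGroup α ⧸ H) = x) :
    (shortestSuffix x).length ≤ l.length :=
  Function.argminOn_le _ {l | l ∈ suffixes W ∧ ((mk l : FreeGroup α) : FreeGroup α ⧸ H) = x}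
    ⟨hl, hx⟩

/-- Recursing on the tail, instead of taking `mk (shortestSuffix x)`, makes the transversal
closed under deleting the first letter: the shortest suffixes of different vertices need not be
compatible. -/
noncomputable def transversal (x : suffixCosets H W) : FreeGroup α :=
  match h : shortestSuffix x with
  | [] => 1
  | a :: l => mk [a] * transversal ⟨_, Set.mem_image_of_mem _ <|
      mem_suffixes_of_suffix (h ▸ shortestSuffix_mem x) (List.suffix_cons a l)⟩
termination_by (shortestSuffix x).length
decreasing_by exact (length_shortestSuffix_le (mem_suffixes_of_suffix (h ▸ shortestSuffix_mem x)
  (List.suffix_cons a l)) rfl).trans_lt (h ▸ Nat.lt_succ_self _)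

theorem transversal_of_shortestSuffix_eq_nil {x : suffixCosets H W} (h : shortestSuffix x = []) :
    transversal x = 1 ∧ (x : FreeGroup α ⧸ H) = ↑(1 : FreeGroup α) := by
  rw [transversal.eq_def]
  split
  · rw [← coe_mk_shortestSuffix x, h, ← one_eq_mk]
    exact ⟨rfl, rfl⟩
  · simp_all

theorem transversal_of_shortestSuffix_eq_cons {x : suffixCosets H W} {a : α × Bool}
    {l : List (α × Bool)} (h : shortestSuffix x = a :: l) :
    ∃ y : suffixCosets H W, (shortestSuffix y).length < (shortestSuffix x).length ∧
      (mk [a] : FreeGroup α) • (y : FreeGroup α ⧸ H) = x ∧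
      transversal x = mk [a] * transversal y := by
  rw [transversal.eq_def]
  split
  · simp_all
  · rename_i a' l' h'
    obtain ⟨rfl, rfl⟩ := List.cons.inj (h'.symm.trans h)
    refine ⟨_, ?_, ?_, rfl⟩
    · exact (length_shortestSuffix_le (mem_suffixes_of_suffix (h ▸ shortestSuffix_mem x)
        (List.suffix_cons a' l')) rfl).trans_lt (by simp [h])
    · show (mk [a'] : FreeGroup α) • ((mk l' : FreeGroup α) : FreeGroup α ⧸ H) = x
      rw [← coe_mk_shortestSuffix x, h, MulAction.Quotient.smul_mk, smul_eq_mul, mk_cons a' l']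

theorem coe_transversal (x : suffixCosets H W) : (transversal x : FreeGroup α ⧸ H) = x := by
  induction hn : (shortestSuffix x).length using Nat.strong_induction_on generalizing x with
  | _ n ih =>
  rcases hs : shortestSuffix x with _ | ⟨a, l⟩
  · obtain ⟨ht, hx⟩ := transversal_of_shortestSuffix_eq_nil hs
    rw [ht, hx]
  · obtain ⟨y, hy, hxy, ht⟩ := transversal_of_shortestSuffix_eq_cons hs
    rw [ht, ← smul_eq_mul, ← MulAction.Quotient.smul_mk, ih _ (hn ▸ hy) y rfl, hxy]

variable [Finite W]

variable (H W) in
/-- Each letter `i` acts on `suffixCosets H W` as the partial bijection `x ↦ of i • x`; extending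
these to permutations completes the induced subgraph of the Schreier coset graph of `H` to a
finite cover of the rose. -/
noncomputable def coveringAction : FreeGroup α →* Equiv.Perm (suffixCosets H W) :=
  lift fun i => Classical.choose (exists_perm_coe_eq_smul (suffixCosets H W) (of i))

theorem coveringAction_of {x : suffixCosets H W} {i : α} (hx : IsCosetEdge H W (x, i)) :
    (coveringAction H W (of i) x : FreeGroup α ⧸ H) = of i • (x : FreeGroup α ⧸ H) := by
  rw [coveringAction, lift_apply_of]
  exact Classical.choose_spec (exists_perm_coe_eq_smul (suffixCosets H W) (of i)) x hx

theorem coveringAction_of_inv {x : suffixCosets H W} {i : α}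
    (hx : (of i)⁻¹ • (x : FreeGroup α ⧸ H) ∈ suffixCosets H W) :
    (coveringAction H W (of i)⁻¹ x : FreeGroup α ⧸ H) = (of i)⁻¹ • (x : FreeGroup α ⧸ H) := by
  have hy : coveringAction H W (of i) ⟨_, hx⟩ = x := by
    ext
    rw [coveringAction_of (by simp [IsCosetEdge])]
    simp
  conv_lhs => rw [← hy]
  simp

theorem coveringAction_mk_singleton {x : suffixCosets H W} (a : α × Bool)
    (hx : (mk [a] : FreeGroup α) • (x : FreeGroup α ⧸ H) ∈ suffixCosets H W) :
    (coveringAction H W (mk [a]) x : FreeGroup α ⧸ H) = (mk [a] : FreeGroup α) • (x : _) := by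
  obtain ⟨i, _ | _⟩ := a
  · rw [mk_singleton_false] at hx ⊢
    exact coveringAction_of_inv hx
  · exact coveringAction_of hx

theorem coveringAction_mk {x₀ : suffixCosets H W}
    (hx₀ : (x₀ : FreeGroup α ⧸ H) = ↑(1 : FreeGroup α)) {l : List (α × Bool)}
    (hl : l ∈ suffixes W) :
    (coveringAction H W (mk l) x₀ : FreeGroup α ⧸ H) = ↑(mk l : FreeGroup α) := by
  induction l with
  | nil => rw [← one_eq_mk, _root_.map_one, Equiv.Perm.one_apply, hx₀]
  | cons a l ih =>
    have hx : (mk [a] : FreeGroup α) • (coveringAction H W (mk l) x₀ : FreeGroup α ⧸ H) =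
        ↑(mk (a :: l) : FreeGroup α) := by
      rw [ih (mem_suffixes_of_suffix hl (List.suffix_cons a l)), MulAction.Quotient.smul_mk,
        smul_eq_mul, mk_cons a l]
    rw [mk_cons a l, _root_.map_mul, Equiv.Perm.mul_apply,
      coveringAction_mk_singleton a (hx ▸ ⟨_, hl, rfl⟩), hx, mk_cons a l]

theorem coveringAction_apply {x₀ : suffixCosets H W}
    (hx₀ : (x₀ : FreeGroup α ⧸ H) = ↑(1 : FreeGroup α)) {w : FreeGroup α} (hw : w ∈ W) :
    (coveringAction H W w x₀ : FreeGroup α ⧸ H) = ↑w := by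
  simpa only [mk_toWord] using coveringAction_mk hx₀ ⟨w, hw, List.suffix_refl _⟩

theorem coveringAction_apply_eq_iff {x₀ : suffixCosets H W}
    (hx₀ : (x₀ : FreeGroup α ⧸ H) = ↑(1 : FreeGroup α)) {w : FreeGroup α} (hw : w ∈ W) :
    coveringAction H W w x₀ = x₀ ↔ w ∈ H := by
  rw [← Subtype.coe_inj, coveringAction_apply hx₀ hw, hx₀, QuotientGroup.eq, mul_one, inv_mem_iff]

theorem isSchreierTransversal {x₀ : suffixCosets H W}
    (hx₀ : (x₀ : FreeGroup α ⧸ H) = ↑(1 : FreeGroup α)) :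
    IsSchreierTransversal (coveringAction H W) transversal x₀ where
  apply_root x := by
    induction hn : (shortestSuffix x).length using Nat.strong_induction_on generalizing x with
    | _ n ih =>
    rcases hs : shortestSuffix x with _ | ⟨a, l⟩
    · obtain ⟨ht, hx⟩ := transversal_of_shortestSuffix_eq_nil hs
      rw [ht, _root_.map_one, Equiv.Perm.one_apply]
      exact Subtype.ext (hx₀.trans hx.symm)
    · obtain ⟨y, hy, hxy, ht⟩ := transversal_of_shortestSuffix_eq_cons hs
      rw [ht, _root_.map_mul, Equiv.Perm.mul_apply, ih _ (hn ▸ hy) y rfl]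
      ext
      rw [coveringAction_mk_singleton a (hxy ▸ x.2), hxy]
  exists_rank := by
    refine ⟨fun x => (shortestSuffix x).length, fun x => ?_⟩
    rcases hs : shortestSuffix x with _ | ⟨⟨i, _ | _⟩, l⟩
    · exact Or.inl (transversal_of_shortestSuffix_eq_nil hs).1
    · obtain ⟨y, hy, -, ht⟩ := transversal_of_shortestSuffix_eq_cons hs
      exact Or.inr ⟨y, i, hy, Or.inr (by rw [ht, mk_singleton_false])⟩
    · obtain ⟨y, hy, -, ht⟩ := transversal_of_shortestSuffix_eq_cons hs
      exact Or.inr ⟨y, i, hy, Or.inl ht⟩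

theorem pathLabel_mk_mem_closure {x₀ : suffixCosets H W}
    (hx₀ : (x₀ : FreeGroup α ⧸ H) = ↑(1 : FreeGroup α)) {l : List (α × Bool)}
    (hl : l ∈ suffixes W) :
    pathLabel (coveringAction H W) (schreierLabel (coveringAction H W) transversal) (mk l) x₀ ∈
      Subgroup.closure (of '' {e : schreierEdges (coveringAction H W) transversal |
        IsCosetEdge H W e}) := by
  induction l with
  | nil => rw [← one_eq_mk, pathLabel_one]; exact one_mem _
  | cons a l ih =>
    have hl' := mem_suffixes_of_suffix hl (List.suffix_cons a l)
    have hy : (mk [a] : FreeGroup α) • (coveringAction H W (mk l) x₀ : FreeGroup α ⧸ H) ∈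
        suffixCosets H W := by
      rw [coveringAction_mk hx₀ hl', MulAction.Quotient.smul_mk, smul_eq_mul, ← mk_cons a l]
      exact ⟨_, hl, rfl⟩
    rw [mk_cons a l, pathLabel_mul]
    refine mul_mem ?_ (ih hl')
    obtain ⟨i, _ | _⟩ := a
    · rw [mk_singleton_false] at hy ⊢
      rw [pathLabel_inv_of]
      refine inv_mem (schreierLabel_mem_closure (IsCosetEdge H W) ?_)
      show of i • (coveringAction H W (of i)⁻¹ _ : FreeGroup α ⧸ H) ∈ _
      rw [coveringAction_of_inv hy, smul_inv_smul]
      exact Subtype.prop _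
    · show pathLabel _ _ (of i) _ ∈ _
      rw [pathLabel_of]
      exact schreierLabel_mem_closure (IsCosetEdge H W) hy

theorem schreierGen_mem {x : suffixCosets H W} {i : α} (h : IsCosetEdge H W (x, i)) :
    schreierGen (coveringAction H W) transversal (x, i) ∈ H := by
  have hcoe : ((of i * transversal x : FreeGroup α) : FreeGroup α ⧸ H) =
      ↑(transversal (coveringAction H W (of i) x)) := by
    rw [coe_transversal, coveringAction_of h, ← coe_transversal x, MulAction.Quotient.smul_mk,
      smul_eq_mul]
  rw [schreierGen, mul_assoc]
  exact QuotientGroup.eq.1 hcoe.symm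

theorem closure_schreierHom_cosetEdges {x₀ : suffixCosets H W}
    (hx₀ : (x₀ : FreeGroup α ⧸ H) = ↑(1 : FreeGroup α)) {gens : Set (FreeGroup α)}
    (hgens : Subgroup.closure gens = H) (hW : gens ⊆ W) :
    Subgroup.closure ((fun e => schreierHom (coveringAction H W) transversal (of e)) ''
      {e | IsCosetEdge H W e}) = H := by
  refine le_antisymm ?_ ?_
  · rw [Subgroup.closure_le]
    rintro _ ⟨⟨⟨x, i⟩, _⟩, he, rfl⟩
    simpa only [SetLike.mem_coe, schreierHom, lift_apply_of] using schreierGen_mem he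
  · refine hgens.symm.le.trans ((Subgroup.closure_le _).2 fun h hh => ?_)
    have hfix : coveringAction H W h x₀ = x₀ :=
      (coveringAction_apply_eq_iff hx₀ (hW hh)).2 (hgens ▸ Subgroup.subset_closure hh)
    rw [← Set.image_image, ← MonoidHom.map_closure]
    refine ⟨pathLabel (coveringAction H W) (schreierLabel _ transversal) h x₀, ?_, ?_⟩
    · rw [← mk_toWord (x := h)]
      exact pathLabel_mk_mem_closure hx₀ ⟨h, hW hh, List.suffix_refl _⟩
    · rw [schreierHom_pathLabel, hfix, (isSchreierTransversal hx₀).root_eq_one, mul_one, inv_one,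
        one_mul]

theorem isInternalFreeProduct_stabilizer {x₀ : suffixCosets H W}
    (hx₀ : (x₀ : FreeGroup α ⧸ H) = ↑(1 : FreeGroup α)) {gens : Set (FreeGroup α)}
    (hgens : Subgroup.closure gens = H) (hW : gens ⊆ W) :
    ∃ K, IsInternalFreeProduct
      ((MulAction.stabilizer (Equiv.Perm (suffixCosets H W)) x₀).comap (coveringAction H W))
      H K := by
  have ht := isSchreierTransversal hx₀
  have := isInternalFreeProduct_closure_image ht.schreierHom_injective (IsCosetEdge H W ·)
  rw [ht.range_schreierHom, closure_schreierHom_cosetEdges hx₀ hgens hW] at this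
  exact ⟨_, this⟩

end MarshallHall

/-- Marshall Hall's theorem. -/
theorem marshall_hall {n : ℕ} (H : Subgroup (FreeGroup (Fin n))) (hfg : H.FG)
    (g : FreeGroup (Fin n)) (hg : g ∉ H) :
    ∃ F' : Subgroup (FreeGroup (Fin n)), F'.FG ∧ F'.FiniteIndex ∧ g ∉ F' ∧
      ∃ K : Subgroup (FreeGroup (Fin n)), IsInternalFreeProduct F' H K := by
  obtain ⟨gens, hgens⟩ := hfg
  let W : Set (FreeGroup (Fin n)) := insert g gens
  let φ := MarshallHall.coveringAction H W
  let x₀ : MarshallHall.suffixCosets H W :=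
    ⟨_, Set.mem_image_of_mem _ ⟨g, Set.mem_insert g _, List.nil_suffix⟩⟩
  have hx₀ : (x₀ : FreeGroup (Fin n) ⧸ H) = ↑(1 : FreeGroup (Fin n)) := by
    rw [FreeGroup.one_eq_mk]
  let F' := (MulAction.stabilizer (Equiv.Perm (MarshallHall.suffixCosets H W)) x₀).comap φ
  have hF' : F'.FiniteIndex := Subgroup.finiteIndex_of_le (H := φ.ker) fun w hw => by
    simp_all [F']
  refine ⟨F', (Group.fg_iff_subgroup_fg F').1 inferInstance, hF', fun hgF' => hg ?_,
    MarshallHall.isInternalFreeProduct_stabilizer hx₀ hgens (Set.subset_insert g _)⟩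
  rw [Subgroup.mem_comap, MulAction.mem_stabilizer_iff, Equiv.Perm.smul_def] at hgF'
  exact (MarshallHall.coveringAction_apply_eq_iff hx₀ (Set.mem_insert g _)).1 hgF'
end

section
/- Let H be a finitely generated e-algebraically closed proper subgroup of F_n. Then H has infinite index in F_n. -/
open Set Pointwise MeasureTheory

variable {T : Type*} [MetricSpace T]

/-!
In any group, if `H` is e-algebraically closed and `g ∉ H`, then no nontrivial power of `g`
lies in `H`: otherwise `g ^ m` would have two distinct preimages in `H ∗ ⟨g⟩`, one in each factor.
A subgroup of finite index contains a positive power of every element, so in a torsion-free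
group, such as a free group, a proper e-algebraically closed subgroup has infinite index.
-/

namespace IsEAlgClosed

variable {G : Type*} [Group G] {H : Subgroup G}

theorem pow_eq_one_of_pow_mem (hH : IsEAlgClosed H) {g : G} (hg : g ∉ H) {m : ℕ}
    (hm : g ^ m ∈ H) : g ^ m = 1 := by
  set K := Subgroup.zpowers g
  have hmK : g ^ m ∈ K := K.pow_mem (Subgroup.mem_zpowers g) m
  have hsame : (Monoid.Coprod.inl ⟨g ^ m, hm⟩ : Monoid.Coprod H K) =
      Monoid.Coprod.inr ⟨g ^ m, hmK⟩ := hH g hg (by simp)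
  simpa using (congrArg (Monoid.Coprod.lift 1 K.subtype) hsame).symm

theorem index_eq_zero [IsMulTorsionFree G] (hH : IsEAlgClosed H) (hne : H ≠ ⊤) :
    H.index = 0 := by
  by_contra hidx
  obtain ⟨g, -, hg⟩ := SetLike.exists_of_lt hne.lt_top
  obtain ⟨m, hm0, -, hmH⟩ := Subgroup.exists_pow_mem_of_index_ne_zero hidx g
  have hg1 : g = 1 := (pow_eq_one_iff_left hm0.ne').mp (hH.pow_eq_one_of_pow_mem hg hmH)
  exact hg (hg1 ▸ H.one_mem)

end IsEAlgClosed

theorem eAlgClosed_proper_infinite_index_general {n : ℕ}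
    (H : Subgroup (FreeGroup (Fin n)))
    (heac : IsEAlgClosed H) (hproper : H ≠ ⊤) :
    H.index = 0 :=
  heac.index_eq_zero hproper

/-- a f.g. e-algebraically closed proper subgroup of a free
group has infinite index. -/
theorem eAlgClosed_proper_infinite_index {n : ℕ}
    (H : Subgroup (FreeGroup (Fin n))) (hfg : H.FG)
    (heac : IsEAlgClosed H) (hproper : H ≠ ⊤) :
    H.index = 0 :=
  eAlgClosed_proper_infinite_index_general H heac hproper
end
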